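/- arXiv:2412.20263 — 3 statements merged into one kernel-verified Lean document; each statement's English description precedes it below -/
import Mathlib

section
/- For every integer d ≥ 3, the Kesten–McKay density is a probability density: ∫_{-2}^{2} ρ_d(x) dx = 1. -/
/-!
With `a = d / √(d - 1)` one has `1 + 1 / (d - 1) - x² / d = (a² - x²) / d`, so the density is
`d / (2π) · √(4 - x²) / (a² - x²)` with `a > 2`. For `0 < r < a` and `b = √(a² - r²)`, the function
`arcsin (x / r) - (b / a) · arcsin (b x / (r √(a² - x²)))` is continuous on `[-r, r]` and is a
primitive of `√(r² - x²) / (a² - x²)` inside, which gives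
`∫_{-r}^{r} √(r² - x²) / (a² - x²) dx = π (1 - b / a)`. For `r = 2` one finds `b / a = (d - 2) / d`.
-/

/-- The Kesten–McKay density for a `d`-regular graph (normalized adjacency matrix). -/
noncomputable def kestenMcKay (d : ℕ) (x : ℝ) : ℝ :=
  if x ∈ Set.Icc (-2 : ℝ) 2 then
    (1 + 1 / ((d : ℝ) - 1) - x ^ 2 / (d : ℝ))⁻¹ * Real.sqrt (4 - x ^ 2) / (2 * Real.pi)
  else 0

open Real Set intervalIntegral

lemma hasDerivAt_arcsin_div {r x : ℝ} (hx : x ∈ Ioo (-r) r) :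
    HasDerivAt (fun y => arcsin (y / r)) (1 / √(r ^ 2 - x ^ 2)) x := by
  have hr : 0 < r := by linarith [hx.1, hx.2]
  have hlo : -1 < x / r := by rw [lt_div_iff₀ hr]; linarith [hx.1]
  have hhi : x / r < 1 := by rw [div_lt_iff₀ hr]; linarith [hx.2]
  have hsqrt : √(1 - (x / r) ^ 2) = √(r ^ 2 - x ^ 2) / r := by
    rw [show 1 - (x / r) ^ 2 = (r ^ 2 - x ^ 2) / r ^ 2 by field_simp,
      sqrt_div' _ (by positivity), sqrt_sq hr.le]
  have hpos : 0 < √(r ^ 2 - x ^ 2) := sqrt_pos.2 (by nlinarith [hx.1, hx.2])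
  refine ((hasDerivAt_arcsin hlo.ne' hhi.ne).comp x
    ((hasDerivAt_id' x).div_const r)).congr_deriv ?_
  rw [hsqrt]; field_simp

lemma hasDerivAt_sqrt_sq_sub {a x : ℝ} (hx : x ^ 2 < a ^ 2) :
    HasDerivAt (fun y => √(a ^ 2 - y ^ 2)) (-x / √(a ^ 2 - x ^ 2)) x := by
  refine ((hasDerivAt_pow 2 x).const_sub (a ^ 2) |>.sqrt (by linarith)).congr_deriv ?_
  field_simp; ring

lemma hasDerivAt_arcsin_mul_div_sqrt {r a x : ℝ} (hra : r < a) (hx : x ∈ Ioo (-r) r) :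
    HasDerivAt (fun y => arcsin (√(a ^ 2 - r ^ 2) * y / (r * √(a ^ 2 - y ^ 2))))
      (a * √(a ^ 2 - r ^ 2) / ((a ^ 2 - x ^ 2) * √(r ^ 2 - x ^ 2))) x := by
  have hr : 0 < r := by linarith [hx.1, hx.2]
  have hxr : x ^ 2 < r ^ 2 := by nlinarith [hx.1, hx.2]
  have hxa : x ^ 2 < a ^ 2 := by nlinarith
  set b := √(a ^ 2 - r ^ 2)
  set s := √(a ^ 2 - x ^ 2) with hs_def
  have ha : 0 < a := by linarith
  have hb : b ^ 2 = a ^ 2 - r ^ 2 := sq_sqrt (by nlinarith)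
  have hs : s ^ 2 = a ^ 2 - x ^ 2 := sq_sqrt (by linarith)
  have hs0 : 0 < s := sqrt_pos.2 (by linarith)
  have ht : √(r ^ 2 - x ^ 2) ^ 2 = r ^ 2 - x ^ 2 := sq_sqrt (by linarith)
  have ht0 : 0 < √(r ^ 2 - x ^ 2) := sqrt_pos.2 (by linarith)
  have hinner :
      HasDerivAt (fun y => b * y / (r * √(a ^ 2 - y ^ 2))) (b * a ^ 2 / (r * s ^ 3)) x := by
    refine (((hasDerivAt_id' x).const_mul b).div ((hasDerivAt_sqrt_sq_sub hxa).const_mul r)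
      (by positivity)).congr_deriv ?_
    rw [← hs_def]
    field_simp
    linear_combination b * hs
  have hone_sub : 1 - (b * x / (r * s)) ^ 2 = (a * √(r ^ 2 - x ^ 2) / (r * s)) ^ 2 := by
    field_simp
    linear_combination (-x ^ 2) * hb + r ^ 2 * hs - a ^ 2 * ht
  have hlt : (b * x / (r * s)) ^ 2 < 1 := by
    have : 0 < (a * √(r ^ 2 - x ^ 2) / (r * s)) ^ 2 := by positivity
    linarith
  have hlo : -1 < b * x / (r * s) := by nlinarith
  have hhi : b * x / (r * s) < 1 := by nlinarith
  refine ((hasDerivAt_arcsin hlo.ne' hhi.ne).comp x hinner).congr_deriv ?_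
  have hax : a ^ 2 - x ^ 2 ≠ 0 := by linarith
  rw [hone_sub, sqrt_sq (by positivity)]
  field_simp
  linear_combination (-b) * hs
theorem integral_sqrt_sq_sub_sq_div_sq_sub_sq {r a : ℝ} (hr : 0 < r) (hra : r < a) :
    ∫ x in -r..r, √(r ^ 2 - x ^ 2) / (a ^ 2 - x ^ 2) = π * (1 - √(a ^ 2 - r ^ 2) / a) := by
  set b := √(a ^ 2 - r ^ 2) with hb_def
  have ha : 0 < a := hr.trans hra
  have hb : 0 < b := sqrt_pos.2 (by nlinarith)
  have hb_sq : b ^ 2 = a ^ 2 - r ^ 2 := sq_sqrt (by nlinarith)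
  have hden : ∀ x ∈ Icc (-r) r, 0 < a ^ 2 - x ^ 2 := fun x hx => by nlinarith [hx.1, hx.2]
  let F := fun y => arcsin (y / r) - b / a * arcsin (b * y / (r * √(a ^ 2 - y ^ 2)))
  have hF_cont : ContinuousOn F (Icc (-r) r) := by
    refine (continuous_arcsin.comp_continuousOn (by fun_prop)).sub
      (continuousOn_const.mul (continuous_arcsin.comp_continuousOn
        (ContinuousOn.div (by fun_prop) (by fun_prop) fun y hy => ?_)))
    have := sqrt_pos.2 (hden y hy)
    positivity
  have hF_deriv : ∀ x ∈ Ioo (-r) r, HasDerivAt F (√(r ^ 2 - x ^ 2) / (a ^ 2 - x ^ 2)) x := by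
    intro x hx
    have ht : √(r ^ 2 - x ^ 2) ^ 2 = r ^ 2 - x ^ 2 := sq_sqrt (by nlinarith [hx.1, hx.2])
    have ht0 : 0 < √(r ^ 2 - x ^ 2) := sqrt_pos.2 (by nlinarith [hx.1, hx.2])
    have hx0 := hden x (Ioo_subset_Icc_self hx)
    refine ((hasDerivAt_arcsin_div hx).sub
      ((hasDerivAt_arcsin_mul_div_sqrt hra hx).const_mul (b / a))).congr_deriv ?_
    field_simp
    linear_combination -ht - hb_sq
  have hint : IntervalIntegrable (fun x => √(r ^ 2 - x ^ 2) / (a ^ 2 - x ^ 2))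
      MeasureTheory.volume (-r) r := by
    refine ContinuousOn.intervalIntegrable ?_
    rw [uIcc_of_le (by linarith)]
    exact ContinuousOn.div (by fun_prop) (by fun_prop) fun x hx => (hden x hx).ne'
  have hinner (y : ℝ) (hy : y ^ 2 = r ^ 2) : b * y / (r * √(a ^ 2 - y ^ 2)) = y / r := by
    rw [hy, ← hb_def]; field_simp
  rw [integral_eq_sub_of_hasDerivAt_of_le (by linarith) hF_cont hF_deriv hint]
  simp only [F, hinner r rfl, hinner (-r) (neg_sq r), neg_div, div_self hr.ne', arcsin_one,
    arcsin_neg]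
  ring

lemma sq_div_sqrt_sub_one {D : ℝ} (hD : 1 < D) : (D / √(D - 1)) ^ 2 = D ^ 2 / (D - 1) := by
  rw [div_pow, sq_sqrt (by linarith)]

lemma two_lt_div_sqrt_sub_one {D : ℝ} (hD : 2 < D) : 2 < D / √(D - 1) := by
  refine lt_of_pow_lt_pow_left₀ 2 (by positivity) ?_
  rw [sq_div_sqrt_sub_one (by linarith), lt_div_iff₀ (by linarith)]
  nlinarith

lemma sqrt_sq_sub_four_div_eq {D : ℝ} (hD : 2 < D) :
    √((D / √(D - 1)) ^ 2 - 4) / (D / √(D - 1)) = (D - 2) / D := by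
  have h1 : 0 < √(D - 1) := sqrt_pos.2 (by linarith)
  have h1' : D - 1 ≠ 0 := by linarith
  have h2 : 0 < D - 2 := by linarith
  rw [sq_div_sqrt_sub_one (by linarith),
    show D ^ 2 / (D - 1) - 4 = ((D - 2) / √(D - 1)) ^ 2 by
      rw [div_pow, sq_sqrt (by linarith)]; field_simp; ring,
    sqrt_sq (by positivity)]
  field_simp

lemma kestenMcKay_of_mem_Icc {d : ℕ} (hd : 1 < d) {x : ℝ} (hx : x ∈ Icc (-2) 2) :
    kestenMcKay d x = d / (2 * π) * (√(2 ^ 2 - x ^ 2) / ((d / √(d - 1)) ^ 2 - x ^ 2)) := by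
  have hd' : (1 : ℝ) < d := by exact_mod_cast hd
  have hd1 : (d : ℝ) - 1 ≠ 0 := by linarith
  rw [kestenMcKay, if_pos hx, sq_div_sqrt_sub_one hd',
    show 1 + 1 / ((d : ℝ) - 1) - x ^ 2 / d = (d ^ 2 / (d - 1) - x ^ 2) / d by
      field_simp; ring]
  norm_num
  ring

/-- The Kesten–McKay density is a probability density: it integrates to `1` over `[-2,2]`. -/
theorem kestenMcKay_integral_eq_one (d : ℕ) (hd : 3 ≤ d) :
    ∫ x in (-2 : ℝ)..2, kestenMcKay d x = 1 := by
  have hd' : (2 : ℝ) < d := by exact_mod_cast hd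
  have hπ := pi_pos
  set a := (d : ℝ) / √(d - 1)
  calc ∫ x in (-2 : ℝ)..2, kestenMcKay d x
      = ∫ x in (-2 : ℝ)..2, d / (2 * π) * (√(2 ^ 2 - x ^ 2) / (a ^ 2 - x ^ 2)) :=
        integral_congr fun x hx =>
          kestenMcKay_of_mem_Icc (by omega) (uIcc_of_le (by norm_num : (-2 : ℝ) ≤ 2) ▸ hx)
    _ = d / (2 * π) * (π * (1 - √(a ^ 2 - 2 ^ 2) / a)) := by
        rw [integral_const_mul,
          integral_sqrt_sq_sub_sq_div_sq_sub_sq two_pos (two_lt_div_sqrt_sub_one hd')]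
    _ = 1 := by
        rw [show (2 : ℝ) ^ 2 = 4 by norm_num, sqrt_sq_sub_four_div_eq hd']
        field_simp
        ring
end

section
/- There exist constants C > 0 and δ > 0 such that for all z in the upper half-plane with |z - 2| < δ: |m_sc(z) + 1 - √(z-2)| ≤ C|z-2| and |1 - m_sc(z)² - 2√(z-2)| ≤ C|z-2|, where √(z-2) denotes the principal branch of the square root. -/
/-!
With `w = z - 2` and `t = m + 1` the quadratic becomes `t² = w (1 - t)`, so `t` is small,
`‖t‖² ≤ 2‖w‖`, and `t = √w · v` for a square root `v` of `1 - t`. The sign conditions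
`Im t > 0`, `Im √w ≥ 0` force `v` to be the root near `+1`, and then
`‖v - 1‖ ≤ ‖v - 1‖ ‖v + 1‖ = ‖t‖` gives `‖t - √w‖ ≤ ‖√w‖ ‖t‖ ≤ 2‖w‖`.
-/

open Complex

namespace Complex

lemma cpow_one_half_sq (w : ℂ) : (w ^ (1 / 2 : ℂ)) ^ 2 = w := by
  rw [one_div]
  exact cpow_ofNat_inv_pow w 2

lemma im_cpow_one_half_nonneg {w : ℂ} (hw : 0 ≤ w.im) : 0 ≤ (w ^ (1 / 2 : ℂ)).im := by
  rcases eq_or_ne w 0 with rfl | hw0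
  · simp
  have harg : (log w * (1 / 2)).im = arg w / 2 := by
    simp only [mul_im, log_re, log_im, one_div, inv_re, inv_im]
    norm_num
    ring
  rw [cpow_def_of_ne_zero hw0, exp_im, harg]
  exact mul_nonneg (Real.exp_pos _).le <| Real.sin_nonneg_of_nonneg_of_le_pi
    (by linarith [arg_nonneg_iff.2 hw]) (by linarith [arg_le_pi w, Real.pi_pos])

end Complex

lemma norm_sub_one_le_norm_sq_sub_one {v : ℂ} (hv : 0 ≤ v.re) : ‖v - 1‖ ≤ ‖v ^ 2 - 1‖ := by
  have h_one_le : 1 ≤ ‖v + 1‖ :=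
    le_trans (by simp only [add_re, one_re]; linarith) (re_le_norm (v + 1))
  calc ‖v - 1‖ ≤ ‖v - 1‖ * ‖v + 1‖ := le_mul_of_one_le_right (norm_nonneg _) h_one_le
    _ = ‖v ^ 2 - 1‖ := by rw [← norm_mul]; ring_nf

lemma norm_le_of_sq_eq_mul_one_sub {t w : ℂ} (h : t ^ 2 = w * (1 - t)) (hw : ‖w‖ < 1 / 8) :
    ‖t‖ ≤ 1 / 2 ∧ ‖t‖ ^ 2 ≤ 2 * ‖w‖ := by
  have hsq : ‖t‖ ^ 2 ≤ ‖w‖ * (1 + ‖t‖) := by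
    calc ‖t‖ ^ 2 = ‖w‖ * ‖1 - t‖ := by rw [← norm_pow, h, norm_mul]
      _ ≤ ‖w‖ * (1 + ‖t‖) := by
        gcongr
        simpa using norm_sub_le (1 : ℂ) t
  have hsmall : ‖t‖ ≤ 1 / 2 := by nlinarith [norm_nonneg t, norm_nonneg w]
  exact ⟨hsmall, by nlinarith [norm_nonneg w]⟩

lemma re_pos_of_sq_eq_one_sub {s t v : ℂ} (hs_im : 0 ≤ s.im) (hs : ‖s‖ ^ 2 < 2)
    (ht_im : 0 < t.im) (ht : ‖t‖ ≤ 1 / 2) (hv : v ^ 2 = 1 - t) (hsv : t = s * v) :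
    0 < v.re := by
  by_contra! hv_re
  have hv_re_sq : v.re ^ 2 - v.im ^ 2 = 1 - t.re := by
    simpa [sq] using congrArg re hv
  have hv_im_sq : 2 * v.re * v.im = -t.im := by
    have h := congrArg im hv
    simp only [sq, mul_im, sub_im, one_im, zero_sub] at h
    linarith
  have ht_im_eq : t.im = s.re * v.im + s.im * v.re := by rw [hsv, mul_im]
  have ht_re : t.re ≤ 1 / 2 := (re_le_norm t).trans ht
  have hs_re : s.re ^ 2 ≤ ‖s‖ ^ 2 := by
    simpa only [sq_abs] using pow_le_pow_left₀ (abs_nonneg s.re) (abs_re_le_norm s) 2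
  have hv_re_big : 1 / 2 ≤ v.re ^ 2 := by nlinarith [sq_nonneg v.im]
  have hv_re_neg : v.re < 0 := lt_of_le_of_ne hv_re (by rintro h; norm_num [h] at hv_re_big)
  have hv_im_pos : 0 < v.im := by nlinarith
  -- `-2 Re v · Im v = Im t ≤ Re s · Im v`, so `2 |Re v| ≤ Re s ≤ ‖s‖`.
  have h_bound : -2 * v.re ≤ s.re := by
    nlinarith [mul_nonneg hs_im (neg_nonneg.2 hv_re)]
  nlinarith

lemma norm_sub_cpow_one_half_le {t w : ℂ} (hw_im : 0 ≤ w.im) (hw : ‖w‖ < 1 / 8)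
    (ht_im : 0 < t.im) (h : t ^ 2 = w * (1 - t)) : ‖t - w ^ (1 / 2 : ℂ)‖ ≤ 2 * ‖w‖ := by
  set s := w ^ (1 / 2 : ℂ)
  have hs_sq : s ^ 2 = w := cpow_one_half_sq w
  have hs_norm : ‖s‖ ^ 2 = ‖w‖ := by rw [← norm_pow, hs_sq]
  have hs0 : s ≠ 0 := by
    rintro hs
    have : t = 0 := by simpa [← hs_sq, hs] using h
    simp [this] at ht_im
  obtain ⟨ht_half, ht_sq⟩ := norm_le_of_sq_eq_mul_one_sub h hw
  set v := t / s
  have hsv : t = s * v := (mul_div_cancel₀ t hs0).symm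
  have hv_sq : v ^ 2 = 1 - t := by
    have : s ^ 2 * v ^ 2 = s ^ 2 * (1 - t) := by rw [← mul_pow, ← hsv, h, hs_sq]
    exact mul_left_cancel₀ (pow_ne_zero 2 hs0) this
  have hv_re : 0 < v.re := re_pos_of_sq_eq_one_sub (im_cpow_one_half_nonneg hw_im)
    (by linarith) ht_im ht_half hv_sq hsv
  have hst : (‖s‖ * ‖t‖) ^ 2 ≤ (2 * ‖w‖) ^ 2 := by
    rw [mul_pow, hs_norm]
    nlinarith [norm_nonneg w]
  calc ‖t - s‖ = ‖s‖ * ‖v - 1‖ := by rw [← norm_mul, hsv, mul_sub, mul_one]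
    _ ≤ ‖s‖ * ‖v ^ 2 - 1‖ := by gcongr; exact norm_sub_one_le_norm_sq_sub_one hv_re.le
    _ = ‖s‖ * ‖t‖ := by rw [hv_sq, sub_sub_cancel_left, norm_neg]
    _ ≤ 2 * ‖w‖ := (pow_le_pow_iff_left₀ (by positivity) (by positivity) two_ne_zero).1 hst

/-- Near the spectral edge `2`, the Stieltjes transform of the semicircle distribution
(characterized by `m_sc² + z·m_sc + 1 = 0` with `Im m_sc > 0` on the upper half-plane)
satisfies `m_sc(z) = -1 + √(z-2) + O(|z-2|)` and `1 - m_sc(z)² = 2√(z-2) + O(|z-2|)`,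
where `√(z-2)` is the principal branch of the square root. -/
theorem msc_edge_expansion :
    ∃ C > (0 : ℝ), ∃ δ > (0 : ℝ), ∀ z msc : ℂ, 0 < z.im → ‖z - 2‖ < δ →
      msc ^ 2 + z * msc + 1 = 0 → 0 < msc.im →
      ‖msc + 1 - (z - 2) ^ ((1 : ℂ) / 2)‖ ≤ C * ‖z - 2‖ ∧
      ‖1 - msc ^ 2 - 2 * (z - 2) ^ ((1 : ℂ) / 2)‖ ≤ C * ‖z - 2‖ := by
  refine ⟨6, by norm_num, 1 / 8, by norm_num, fun z msc hz hzδ hmsc hmsc_im => ?_⟩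
  have hw_im : 0 ≤ (z - 2).im := by simpa using hz.le
  have ht_im : 0 < (msc + 1).im := by simpa using hmsc_im
  have ht : (msc + 1) ^ 2 = (z - 2) * (1 - (msc + 1)) := by linear_combination hmsc
  have ht_sq := (norm_le_of_sq_eq_mul_one_sub ht hzδ).2
  have hdiff := norm_sub_cpow_one_half_le hw_im hzδ ht_im ht
  have hw_nonneg := norm_nonneg (z - 2)
  refine ⟨by linarith, ?_⟩
  calc ‖1 - msc ^ 2 - 2 * (z - 2) ^ ((1 : ℂ) / 2)‖
      = ‖2 * (msc + 1 - (z - 2) ^ ((1 : ℂ) / 2)) - (msc + 1) ^ 2‖ := by ring_nf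
    _ ≤ 2 * ‖msc + 1 - (z - 2) ^ ((1 : ℂ) / 2)‖ + ‖msc + 1‖ ^ 2 := by
      refine (norm_sub_le _ _).trans ?_
      rw [norm_mul, norm_pow, RCLike.norm_ofNat]
    _ ≤ 6 * ‖z - 2‖ := by linarith
end

section
/- Let a, b, c ∈ ℂ with a ≠ 0, b ≠ 0, and |a·c| ≤ |b|²/4. Then the quadratic equation a x² + b x + c = 0 has two roots x₁, x₂ (with multiplicity) such that: every root x satisfies either |x| ≤ 2|c|/|b| or |x| ≥ |b|/(2|a|), and at least one root satisfies |x| ≤ 2|c|/|b|. -/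
/-!
Writing `a x² + b x + c = a (x - x₁)(x - x₂)` with `‖x₁‖ ≤ ‖x₂‖`, Vieta gives
`‖a‖² ‖x₁‖² ≤ ‖a‖² ‖x₁‖ ‖x₂‖ = ‖a c‖ ≤ ‖b‖² / 4`, so `x₁` lies in the disc `2 ‖a‖ ‖x‖ ≤ ‖b‖`.
For a root `x` in that disc the quadratic term is at most half the linear one,
`‖a x²‖ ≤ ‖b x‖ / 2`, so `b x = -(a x² + c)` forces `‖b x‖ ≤ 2 ‖c‖`.
-/

open Polynomial

section Factorization

variable {K : Type*} [Field K]

theorem quadratic_eq_mul_sub_mul_sub_of_eq_zero {a b c x₁ : K} (ha : a ≠ 0)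
    (hx₁ : a * x₁ ^ 2 + b * x₁ + c = 0) (x : K) :
    a * x ^ 2 + b * x + c = a * (x - x₁) * (x - (-b / a - x₁)) := by
  linear_combination hx₁ - (x - x₁) * mul_div_cancel₀ b ha

theorem exists_quadratic_eq_mul_sub_mul_sub [IsAlgClosed K] {a : K} (ha : a ≠ 0) (b c : K) :
    ∃ x₁ x₂ : K, ∀ x, a * x ^ 2 + b * x + c = a * (x - x₁) * (x - x₂) := by
  obtain ⟨x₁, hx₁⟩ := IsAlgClosed.exists_root (C a * X ^ 2 + C b * X + C c)
    (by simp [degree_quadratic ha])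
  exact ⟨x₁, _, quadratic_eq_mul_sub_mul_sub_of_eq_zero ha (by simpa using hx₁)⟩

end Factorization

section Norms

variable {K : Type*} [NormedField K]

theorem exists_quadratic_eq_mul_sub_mul_sub_norm_le [IsAlgClosed K] {a : K} (ha : a ≠ 0)
    (b c : K) :
    ∃ x₁ x₂ : K, (∀ x, a * x ^ 2 + b * x + c = a * (x - x₁) * (x - x₂)) ∧ ‖x₁‖ ≤ ‖x₂‖ := by
  obtain ⟨x₁, x₂, hfac⟩ := exists_quadratic_eq_mul_sub_mul_sub ha b c
  rcases le_total ‖x₁‖ ‖x₂‖ with hle | hle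
  · exact ⟨x₁, x₂, hfac, hle⟩
  · exact ⟨x₂, x₁, fun x => by rw [hfac, mul_right_comm], hle⟩

variable {a b c : K}

theorem two_mul_norm_mul_norm_le_of_quadratic_eq_mul_sub_mul_sub {x₁ x₂ : K}
    (hfac : ∀ x, a * x ^ 2 + b * x + c = a * (x - x₁) * (x - x₂)) (hle : ‖x₁‖ ≤ ‖x₂‖)
    (h : ‖a * c‖ ≤ ‖b‖ ^ 2 / 4) :
    2 * ‖a‖ * ‖x₁‖ ≤ ‖b‖ := by
  have hvieta : c = a * x₁ * x₂ := by linear_combination hfac 0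
  have hsq : (2 * ‖a‖ * ‖x₁‖) ^ 2 ≤ ‖b‖ ^ 2 := by
    calc (2 * ‖a‖ * ‖x₁‖) ^ 2 = 4 * ‖a‖ * (‖a‖ * ‖x₁‖ * ‖x₁‖) := by ring
      _ ≤ 4 * ‖a‖ * (‖a‖ * ‖x₁‖ * ‖x₂‖) := by gcongr
      _ = 4 * ‖a * c‖ := by rw [hvieta]; simp only [norm_mul]; ring
      _ ≤ ‖b‖ ^ 2 := by linarith
  exact (pow_le_pow_iff_left₀ (by positivity) (norm_nonneg b) two_ne_zero).1 hsq

theorem norm_mul_norm_le_of_quadratic_eq_zero {x : K} (hx : a * x ^ 2 + b * x + c = 0)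
    (hsmall : 2 * ‖a‖ * ‖x‖ ≤ ‖b‖) :
    ‖b‖ * ‖x‖ ≤ 2 * ‖c‖ := by
  have hquad : ‖a‖ * ‖x‖ ^ 2 ≤ ‖b‖ * ‖x‖ / 2 := by
    nlinarith [norm_nonneg x]
  have hlin : ‖b‖ * ‖x‖ ≤ ‖a‖ * ‖x‖ ^ 2 + ‖c‖ :=
    calc ‖b‖ * ‖x‖ = ‖a * x ^ 2 + c‖ := by
          rw [← norm_mul, show b * x = -(a * x ^ 2 + c) by linear_combination hx, norm_neg]
      _ ≤ ‖a * x ^ 2‖ + ‖c‖ := norm_add_le _ _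
      _ = ‖a‖ * ‖x‖ ^ 2 + ‖c‖ := by rw [norm_mul, norm_pow]
  linarith

end Norms

/-- Quantitative root-separation for quadratics: if `a, b ≠ 0` and `|ac| ≤ |b|²/4`, then
`a x² + b x + c` has two roots `x₁, x₂` (with multiplicity) such that every root `x`
satisfies `|x| ≤ 2|c|/|b|` or `|x| ≥ |b|/(2|a|)`, and at least one root satisfies
`|x| ≤ 2|c|/|b|`. -/
theorem quadratic_root_separation (a b c : ℂ) (ha : a ≠ 0) (hb : b ≠ 0)
    (h : ‖a * c‖ ≤ ‖b‖ ^ 2 / 4) :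
    ∃ x₁ x₂ : ℂ,
      (∀ x : ℂ, a * x ^ 2 + b * x + c = a * (x - x₁) * (x - x₂)) ∧
      (∀ x : ℂ, a * x ^ 2 + b * x + c = 0 →
        ‖x‖ ≤ 2 * ‖c‖ / ‖b‖ ∨
          ‖b‖ / (2 * ‖a‖) ≤ ‖x‖) ∧
      ‖x₁‖ ≤ 2 * ‖c‖ / ‖b‖ := by
  obtain ⟨x₁, x₂, hfac, hle⟩ := exists_quadratic_eq_mul_sub_mul_sub_norm_le ha b c
  have hsmall_root : ∀ x, a * x ^ 2 + b * x + c = 0 → 2 * ‖a‖ * ‖x‖ ≤ ‖b‖ →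
      ‖x‖ ≤ 2 * ‖c‖ / ‖b‖ := fun x hx hsmall =>
    (le_div_iff₀' (norm_pos_iff.2 hb)).2 (norm_mul_norm_le_of_quadratic_eq_zero hx hsmall)
  refine ⟨x₁, x₂, hfac, fun x hx => ?_, hsmall_root x₁ (by simp [hfac])
    (two_mul_norm_mul_norm_le_of_quadratic_eq_mul_sub_mul_sub hfac hle h)⟩
  rcases le_total (2 * ‖a‖ * ‖x‖) ‖b‖ with hsmall | hlarge
  · exact Or.inl (hsmall_root x hx hsmall)
  · exact Or.inr ((div_le_iff₀' (by positivity)).2 hlarge)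
end
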